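/- Let Φ_H^t be the transversal linear Poincaré flow of a C² Hamiltonian over a regular energy surface, with a Φ_H^t-invariant splitting N_x = N⁻_x ⊕ N⁺_x into one-dimensional subbundles, and let α_t denote the angle between N⁻_{X_H^t(x)} and N⁺_{X_H^t(x)}. Since Φ_H^t preserves the induced area form, for every x and t one has sin(α_0) = ‖Φ_H^t(x)|_{N⁻_x}‖ · ‖Φ_H^t(x)|_{N⁺_x}‖ · sin(α_t) · ‖X_H(X_H^t(x))‖ / ‖X_H(x)‖. -/

import Mathlib

open Set

noncomputable section

/-- An abstract framework for the C² Hamiltonian dynamics of a compact symplectic manifold `M`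
whose tangent spaces are identified with the model inner-product space `E` (of dimension
`2d`).  To each C² Hamiltonian `H : M → ℝ` (the admissible ones form the set `Ham`, carrying
the C² distance `d2`) it associates: the Hamiltonian flow `flow H`, which preserves `H`; the
set `Crit H` of critical points of `H` (= singularities of the Hamiltonian vector field
`X_H`); the pointwise norm `normX H` of `X_H` and the line `Xdir H x = ℝ·X_H(x)`; the tangent
cocycle `D H t x = D_x X_H^t`, which preserves the symplectic form `symp`; and the normal
bundle `N H x = (ℝ X_H(x))^⊥ ∩ ker d_xH` together with the transversal linear Poincaré
cocycle `Φ H t x`. -/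
structure HamFramework (E : Type*) [NormedAddCommGroup E] [InnerProductSpace ℝ E]
    (M : Type*) [MetricSpace M] [CompactSpace M] where
  Ham : Set (M → ℝ)
  d2 : (M → ℝ) → (M → ℝ) → ℝ
  d2_nonneg : ∀ H H' : M → ℝ, 0 ≤ d2 H H'
  symp : E →ₗ[ℝ] E →ₗ[ℝ] ℝ
  symp_skew : ∀ u v : E, symp u v = - symp v u
  symp_nondeg : ∀ u : E, u ≠ 0 → ∃ v, symp u v ≠ 0
  flow : (M → ℝ) → ℝ → M → M
  flow_zero : ∀ (H : M → ℝ) (x : M), flow H 0 x = x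
  flow_add : ∀ (H : M → ℝ) (s t : ℝ) (x : M), flow H (s + t) x = flow H s (flow H t x)
  flow_cont : ∀ H : M → ℝ, Continuous fun p : ℝ × M => flow H p.1 p.2
  energy_invariant : ∀ (H : M → ℝ) (t : ℝ) (x : M), H (flow H t x) = H x
  Crit : (M → ℝ) → Set M
  crit_fixed : ∀ H : M → ℝ, ∀ x ∈ Crit H, ∀ t : ℝ, flow H t x = x
  normX : (M → ℝ) → M → ℝ
  normX_nonneg : ∀ (H : M → ℝ) (x : M), 0 ≤ normX H x
  normX_eq_zero : ∀ (H : M → ℝ) (x : M), normX H x = 0 ↔ x ∈ Crit H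
  Xdir : (M → ℝ) → M → Submodule ℝ E
  D : (M → ℝ) → ℝ → M → (E →L[ℝ] E)
  D_zero : ∀ (H : M → ℝ) (x : M), D H 0 x = ContinuousLinearMap.id ℝ E
  D_cocycle : ∀ (H : M → ℝ) (s t : ℝ) (x : M), D H (s + t) x = (D H s (flow H t x)).comp (D H t x)
  D_symp : ∀ (H : M → ℝ) (t : ℝ) (x : M) (u v : E), symp (D H t x u) (D H t x v) = symp u v
  N : (M → ℝ) → M → Submodule ℝ E
  Φ : (M → ℝ) → ℝ → M → (E →L[ℝ] E)
  Φ_zero : ∀ (H : M → ℝ) (x : M), Φ H 0 x = ContinuousLinearMap.id ℝ E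
  Φ_cocycle : ∀ (H : M → ℝ) (s t : ℝ) (x : M), Φ H (s + t) x = (Φ H s (flow H t x)).comp (Φ H t x)
  Φ_maps : ∀ (H : M → ℝ) (t : ℝ) (x : M), Set.MapsTo (Φ H t x) (N H x) (N H (flow H t x))

variable {E : Type*} [NormedAddCommGroup E] [InnerProductSpace ℝ E] [FiniteDimensional ℝ E]
variable {M : Type*} [MetricSpace M] [CompactSpace M]

/-- The norm of the restriction of a linear endomorphism to a subspace,
`‖f|_p‖ = sup {‖f v‖ : v ∈ p, ‖v‖ ≤ 1}`. -/
def subNorm (f : E →L[ℝ] E) (p : Submodule ℝ E) : ℝ :=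
  sSup ((fun v => ‖f v‖) '' {v : E | v ∈ p ∧ ‖v‖ ≤ 1})

/-- The orthogonal projection onto a subspace, as an endomorphism of the ambient space;
used to express continuity of a field of subspaces. -/
def projCLM (p : Submodule ℝ E) : E →L[ℝ] E :=
  p.subtypeL.comp p.orthogonalProjection

namespace HamFramework

variable (F : HamFramework E M)

/-- A set invariant under the Hamiltonian flow of `H`. -/
def InvariantOn (H : M → ℝ) (Λ : Set M) : Prop :=
  ∀ t : ℝ, ∀ x ∈ Λ, F.flow H t x ∈ Λ

/-- An energy surface: a connected component of the level set `H ⁻¹' {e}`. -/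
def IsEnergySurface (_F : HamFramework E M) (H : M → ℝ) (e : ℝ) (A : Set M) : Prop :=
  ∃ x : M, H x = e ∧ A = connectedComponentIn (H ⁻¹' {e}) x

/-- The orbit of a point under the Hamiltonian flow of `H`. -/
def orbit (H : M → ℝ) (x : M) : Set M :=
  Set.range fun t : ℝ => F.flow H t x

/-- A closed (periodic, regular) orbit of `H` through `x`, of period `π`. -/
def IsClosedOrbit (H : M → ℝ) (x : M) (π : ℝ) : Prop :=
  0 < π ∧ F.flow H π x = x ∧ x ∉ F.Crit H

/-- `z : ℂ` is a characteristic multiplier of the closed orbit of `x` of period `π`, i.e.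
an eigenvalue of the return map `Φ_H^π(x)` of the transversal linear Poincaré flow,
expressed through a real eigenpair. -/
def IsMultiplier (H : M → ℝ) (x : M) (π : ℝ) (z : ℂ) : Prop :=
  ∃ v w : E, v ∈ F.N H x ∧ w ∈ F.N H x ∧ ¬(v = 0 ∧ w = 0) ∧
    F.Φ H π x v = z.re • v - z.im • w ∧ F.Φ H π x w = z.im • v + z.re • w

/-- A hyperbolic closed orbit: all characteristic multipliers have modulus different
from `1`. -/
def IsHypClosedOrbit (H : M → ℝ) (x : M) (π : ℝ) : Prop :=
  F.IsClosedOrbit H x π ∧ ∀ z : ℂ, F.IsMultiplier H x π z → ‖z‖ ≠ 1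

/-- An elliptic closed orbit: it has a non-real characteristic multiplier of modulus `1`
(its multipliers are then simple, non-real and of modulus one). -/
def IsEllipticClosedOrbit (H : M → ℝ) (x : M) (π : ℝ) : Prop :=
  F.IsClosedOrbit H x π ∧ ∃ z : ℂ, z.im ≠ 0 ∧ ‖z‖ = 1 ∧ F.IsMultiplier H x π z

/-- A parabolic closed orbit: all characteristic multipliers are real of modulus `1`. -/
def IsParabolicClosedOrbit (H : M → ℝ) (x : M) (π : ℝ) : Prop :=
  F.IsClosedOrbit H x π ∧ ∀ z : ℂ, F.IsMultiplier H x π z → z.im = 0 ∧ ‖z‖ = 1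

/-- `z : ℂ` is an eigenvalue of the time-one tangent map `D_x X_H^1` at `x`. -/
def IsTangentMultiplier (H : M → ℝ) (x : M) (z : ℂ) : Prop :=
  ∃ v w : E, ¬(v = 0 ∧ w = 0) ∧
    F.D H 1 x v = z.re • v - z.im • w ∧ F.D H 1 x w = z.im • v + z.re • w

/-- A hyperbolic critical point: the time-one tangent map at the (fixed) critical point has
no eigenvalue on the unit circle. -/
def IsHypCrit (H : M → ℝ) (x : M) : Prop :=
  x ∈ F.Crit H ∧ ∀ z : ℂ, F.IsTangentMultiplier H x z → ‖z‖ ≠ 1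

/-- A hyperbolic set for the Hamiltonian flow `X_H^t`: a compact invariant set carrying a
`DX_H^t`-invariant splitting `E⁻ ⊕ E ⊕ E⁺`, with `E ⊇ ℝ X_H`, uniform contraction on `E⁻`
and uniform expansion on `E⁺`. -/
def IsHypSetFlow (H : M → ℝ) (Λ : Set M) : Prop :=
  F.InvariantOn H Λ ∧ IsCompact Λ ∧
  ∃ (m : ℕ) (θ : ℝ) (Es Ec Eu : M → Submodule ℝ E), 0 < m ∧ 0 < θ ∧ θ < 1 ∧
    (∀ x ∈ Λ, Es x ⊔ Ec x ⊔ Eu x = (⊤ : Submodule ℝ E) ∧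
      Es x ⊓ (Ec x ⊔ Eu x) = ⊥ ∧ Ec x ⊓ Eu x = ⊥) ∧
    (∀ x ∈ Λ, F.Xdir H x ≤ Ec x) ∧
    (∀ x ∈ Λ, ∀ t : ℝ, Set.MapsTo (F.D H t x) (Es x) (Es (F.flow H t x)) ∧
      Set.MapsTo (F.D H t x) (Ec x) (Ec (F.flow H t x)) ∧
      Set.MapsTo (F.D H t x) (Eu x) (Eu (F.flow H t x))) ∧
    (∀ x ∈ Λ, ∀ v ∈ Es x, ‖F.D H (m : ℝ) x v‖ ≤ θ * ‖v‖) ∧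
    (∀ x ∈ Λ, ∀ v ∈ Eu x, ‖F.D H (-(m : ℝ)) x v‖ ≤ θ * ‖v‖)

/-- A hyperbolic set for the transversal linear Poincaré flow `Φ_H^t`: a compact invariant
set with a `Φ_H^t`-invariant splitting `N = N⁻ ⊕ N⁺`, uniformly contracted, resp.
expanded. -/
def IsHypSetPoincare (H : M → ℝ) (Λ : Set M) : Prop :=
  F.InvariantOn H Λ ∧ IsCompact Λ ∧
  ∃ (m : ℕ) (θ : ℝ) (Ns Nu : M → Submodule ℝ E), 0 < m ∧ 0 < θ ∧ θ < 1 ∧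
    (∀ x ∈ Λ, Ns x ⊔ Nu x = F.N H x ∧ Ns x ⊓ Nu x = ⊥) ∧
    (∀ x ∈ Λ, ∀ t : ℝ, Set.MapsTo (F.Φ H t x) (Ns x) (Ns (F.flow H t x)) ∧
      Set.MapsTo (F.Φ H t x) (Nu x) (Nu (F.flow H t x))) ∧
    (∀ x ∈ Λ, ∀ v ∈ Ns x, ‖F.Φ H (m : ℝ) x v‖ ≤ θ * ‖v‖) ∧
    (∀ x ∈ Λ, ∀ v ∈ Nu x, ‖F.Φ H (-(m : ℝ)) x v‖ ≤ θ * ‖v‖)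

/-- An Anosov Hamiltonian level: some energy surface of `(H, e)` is a hyperbolic set for the
Hamiltonian flow. -/
def IsAnosovLevel (H : M → ℝ) (e : ℝ) : Prop :=
  H ∈ F.Ham ∧ ∃ A : Set M, F.IsEnergySurface H e A ∧ F.IsHypSetFlow H A

/-- A `Φ_H^t`-invariant splitting `N = N⁻ ⊕ N⁺` of the normal bundle over `Λ`. -/
def SplittingOn (H : M → ℝ) (Λ : Set M) (Ns Nu : M → Submodule ℝ E) : Prop :=
  (∀ x ∈ Λ, Ns x ⊔ Nu x = F.N H x ∧ Ns x ⊓ Nu x = ⊥) ∧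
  (∀ x ∈ Λ, ∀ t : ℝ, Set.MapsTo (F.Φ H t x) (Ns x) (Ns (F.flow H t x)) ∧
    Set.MapsTo (F.Φ H t x) (Nu x) (Nu (F.flow H t x)))

/-- The splitting `Ns ⊕ Nu` is `m`-dominated (with constant `θ`) for the transversal linear
Poincaré flow over `Λ`: it is invariant, continuous (the fields of orthogonal projections
vary continuously) and `‖Φ_H^m|Ns‖ ≤ θ ‖Φ_H^m|Nu‖` along `Λ`. -/
def mDomWith (H : M → ℝ) (Λ : Set M) (m : ℕ) (Ns Nu : M → Submodule ℝ E) (θ : ℝ) : Prop :=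
  F.SplittingOn H Λ Ns Nu ∧
  ContinuousOn (fun x => projCLM (Ns x)) Λ ∧ ContinuousOn (fun x => projCLM (Nu x)) Λ ∧
  ∀ x ∈ Λ, subNorm (F.Φ H (m : ℝ) x) (Ns x) ≤ θ * subNorm (F.Φ H (m : ℝ) x) (Nu x)

/-- `Φ_H^t` admits an `m`-dominated splitting over `Λ`. -/
def mDominatedOn (H : M → ℝ) (Λ : Set M) (m : ℕ) : Prop :=
  ∃ (Ns Nu : M → Submodule ℝ E) (θ : ℝ), 0 < θ ∧ θ < 1 ∧ F.mDomWith H Λ m Ns Nu θ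

/-- `Φ_H^t` admits a dominated splitting over `Λ`. -/
def DominatedOn (H : M → ℝ) (Λ : Set M) : Prop :=
  ∃ m : ℕ, 0 < m ∧ F.mDominatedOn H Λ m

/-- A Hamiltonian star system: a Hamiltonian level `(H, e)` with distinguished energy
surface `A = E^*_{H,e}` such that, for some C²-neighbourhood of `H` and some interval of
energies around `e`, every closed orbit and every critical point lying on the analytic
continuation of `A` (the energy surface of the perturbed level contained in a fixed
neighbourhood `W` of `A`) is hyperbolic. -/
def IsStarSystem (H : M → ℝ) (e : ℝ) (A : Set M) : Prop :=
  H ∈ F.Ham ∧ F.IsEnergySurface H e A ∧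
  ∃ ε > (0 : ℝ), ∃ δ > (0 : ℝ), ∃ W : Set M, IsOpen W ∧ A ⊆ W ∧
    ∀ H' ∈ F.Ham, F.d2 H H' < ε → ∀ e' : ℝ, |e' - e| < δ →
      ∀ A' : Set M, F.IsEnergySurface H' e' A' → A' ⊆ W →
        (∀ x ∈ A', ∀ π : ℝ, F.IsClosedOrbit H' x π → F.IsHypClosedOrbit H' x π) ∧
        (∀ x ∈ A', x ∈ F.Crit H' → F.IsHypCrit H' x)

end HamFramework

lemma span_of_finrank_one {p : Submodule ℝ E} (h1 : Module.finrank ℝ p = 1)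
    {u : E} (hu : u ∈ p) (hnu : ‖u‖ = 1) : ∀ w ∈ p, ∃ c : ℝ, w = c • u := by
  have hu0 : u ≠ 0 := by intro h; simp [h] at hnu
  have hle : (ℝ ∙ u) ≤ p := (Submodule.span_singleton_le_iff_mem u p).2 hu
  have heq : (ℝ ∙ u) = p := by
    apply Submodule.eq_of_le_of_finrank_le hle
    rw [h1, finrank_span_singleton hu0]
  intro w hw
  rw [← heq] at hw
  obtain ⟨c, hc⟩ := Submodule.mem_span_singleton.1 hw
  exact ⟨c, hc.symm⟩

lemma subNorm_eq_of_unit {f : E →L[ℝ] E} {p : Submodule ℝ E}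
    (h1 : Module.finrank ℝ p = 1) {u : E} (hu : u ∈ p) (hnu : ‖u‖ = 1) :
    subNorm f p = ‖f u‖ := by
  apply IsGreatest.csSup_eq
  constructor
  · exact ⟨u, ⟨hu, hnu.le⟩, rfl⟩
  · rintro r ⟨v, ⟨hv, hvle⟩, rfl⟩
    obtain ⟨c, rfl⟩ := span_of_finrank_one h1 hu hnu v hv
    rw [norm_smul, hnu, mul_one] at hvle
    simp only []
    rw [map_smul, norm_smul]
    calc ‖c‖ * ‖f u‖ ≤ 1 * ‖f u‖ := by
          exact mul_le_mul_of_nonneg_right hvle (norm_nonneg _)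
      _ = ‖f u‖ := one_mul _

/-- Let `N = N⁻ ⊕ N⁺` be a `Φ_H^t`-invariant splitting into
one-dimensional subbundles over a regular energy surface and let `α_t` denote the angle
between the fibers at `X_H^t(x)`.  Since `Φ_H^t` preserves the induced area form `ar`
(which measures the angle between unit vectors weighted by `‖X_H‖`), one has
`sin α₀ = ‖Φ_H^t(x)|_{N⁻}‖ · ‖Φ_H^t(x)|_{N⁺}‖ · sin α_t · ‖X_H(X_H^t(x))‖ / ‖X_H(x)‖`. -/
theorem area_form_angle_identity
    (F : HamFramework E M) (hdim : Module.finrank ℝ E = 4)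
    (H : M → ℝ) (hH : H ∈ F.Ham) (e : ℝ) (A : Set M)
    (hA : F.IsEnergySurface H e A) (hreg : A ∩ F.Crit H = ∅)
    (hinv : F.InvariantOn H A)
    (Ns Nu : M → Submodule ℝ E)
    (hsplit : F.SplittingOn H A Ns Nu)
    (hNs1 : ∀ x ∈ A, Module.finrank ℝ (Ns x) = 1)
    (hNu1 : ∀ x ∈ A, Module.finrank ℝ (Nu x) = 1)
    (ar : M → E →ₗ[ℝ] E →ₗ[ℝ] ℝ)
    (har_inv : ∀ x ∈ A, ∀ t : ℝ, ∀ u ∈ F.N H x, ∀ v ∈ F.N H x,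
      ar (F.flow H t x) (F.Φ H t x u) (F.Φ H t x v) = ar x u v)
    (har_angle : ∀ x ∈ A, ∀ u ∈ Ns x, ∀ v ∈ Nu x, ‖u‖ = 1 → ‖v‖ = 1 →
      |ar x u v| = Real.sin (InnerProductGeometry.angle u v) * F.normX H x) :
    ∀ x ∈ A, ∀ t : ℝ, ∀ u ∈ Ns x, ∀ v ∈ Nu x,
      ∀ u' ∈ Ns (F.flow H t x), ∀ v' ∈ Nu (F.flow H t x),
        ‖u‖ = 1 → ‖v‖ = 1 → ‖u'‖ = 1 → ‖v'‖ = 1 →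
        Real.sin (InnerProductGeometry.angle u v) =
          subNorm (F.Φ H t x) (Ns x) * subNorm (F.Φ H t x) (Nu x) *
            Real.sin (InnerProductGeometry.angle u' v') *
            (F.normX H (F.flow H t x) / F.normX H x) := by
  intro x hx t u hu v hv u' hu' v' hv' hnu hnv hnu' hnv'
  set y := F.flow H t x with hy
  have hyA : y ∈ A := hinv t x hx
  -- x is not critical, so normX H x > 0
  have hxcrit : x ∉ F.Crit H := by
    intro h
    have : x ∈ A ∩ F.Crit H := ⟨hx, h⟩
    rw [hreg] at this; exact this
  have hnX : F.normX H x ≠ 0 := fun h => hxcrit ((F.normX_eq_zero H x).1 h)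
  have hnXpos : 0 < F.normX H x := lt_of_le_of_ne (F.normX_nonneg H x) (Ne.symm hnX)
  -- Φ maps Ns x into Ns y, Nu x into Nu y
  have hΦu : F.Φ H t x u ∈ Ns y := (hsplit.2 x hx t).1 hu
  have hΦv : F.Φ H t x v ∈ Nu y := (hsplit.2 x hx t).2 hv
  -- write Φ u = a • u', Φ v = b • v'
  obtain ⟨a, ha⟩ := span_of_finrank_one (hNs1 y hyA) hu' hnu' _ hΦu
  obtain ⟨b, hb⟩ := span_of_finrank_one (hNu1 y hyA) hv' hnv' _ hΦv
  -- subNorms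
  have hsn1 : subNorm (F.Φ H t x) (Ns x) = |a| := by
    rw [subNorm_eq_of_unit (hNs1 x hx) hu hnu, ha, norm_smul, hnu', mul_one,
      Real.norm_eq_abs]
  have hsn2 : subNorm (F.Φ H t x) (Nu x) = |b| := by
    rw [subNorm_eq_of_unit (hNu1 x hx) hv hnv, hb, norm_smul, hnv', mul_one,
      Real.norm_eq_abs]
  -- memberships in N H x
  have huN : u ∈ F.N H x := by
    have := (hsplit.1 x hx).1
    exact this ▸ (le_sup_left : Ns x ≤ Ns x ⊔ Nu x) hu
  have hvN : v ∈ F.N H x := by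
    have := (hsplit.1 x hx).1
    exact this ▸ (le_sup_right : Nu x ≤ Ns x ⊔ Nu x) hv
  -- key area identity
  have key : Real.sin (InnerProductGeometry.angle u v) * F.normX H x =
      |a| * |b| * (Real.sin (InnerProductGeometry.angle u' v') * F.normX H y) := by
    have h0 := har_angle x hx u hu v hv hnu hnv
    have ht := har_angle y hyA u' hu' v' hv' hnu' hnv'
    have hinv' := har_inv x hx t u huN v hvN
    rw [ha, hb] at hinv'
    have harsmul : ar y (a • u') (b • v') = a * b * ar y u' v' := by
      simp [map_smul, smul_eq_mul, mul_assoc]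
      ring
    rw [harsmul] at hinv'
    calc Real.sin (InnerProductGeometry.angle u v) * F.normX H x
        = |ar x u v| := h0.symm
      _ = |a * b * ar y u' v'| := by rw [hinv']
      _ = |a| * |b| * |ar y u' v'| := by rw [abs_mul, abs_mul]
      _ = |a| * |b| * (Real.sin (InnerProductGeometry.angle u' v') * F.normX H y) := by
          rw [ht]
  rw [hsn1, hsn2]
  field_simp
  linarith [key]

end
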